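/- arXiv:1012.5744 — 2 statements merged into one kernel-verified Lean document; each statement's English description precedes it below -/
import Mathlib

section
/- For all integers k ≥ 1 and n ≥ 0, H_k(ΔS_n)·H_k(Δ^m S_{n+1}) = H_k(Δ^{m+1} S_n)·H_k(S_{n+1}) − H_{k+1}(S_n)·H_{k−1}(Δ^{m+1} S_{n+1}). -/
/-!
Desnanot–Jacobi (Dodgson condensation): `det M · det M° = M₀₀ M_ℓℓ − M₀ℓ M_ℓ0`, where `M_ab` is
the minor of `M` without row `a` and column `b`, `ℓ` is the last index and `M°` is the central
minor. Apply it to the Hankel matrix of `H_{k+1}(S_n)` after replacing every column but the last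
by its forward difference. This changes the determinant only by a sign, and the five minors
become, up to the same sign, the Hankel matrices of `Δ^m S_{n+1}`, `ΔS_n`, `Δ^{m+1}S_n`, `S_{n+1}`
and `Δ^{m+1}S_{n+1}` respectively. Desnanot–Jacobi follows from the adjugate when `det M ≠ 0`, and in general by
specializing the generic matrix over `ℤ[X_ij]`.
-/

/-- Forward difference operator: `(fd u) n = u (n+1) - u n`.
Iterated differences are `fd^[i] u`. -/
def fd (u : ℕ → ℝ) : ℕ → ℝ := fun n => u (n + 1) - u n

/-- Hankel-type determinant `H_k(u_n)` (depending on the fixed integer `m`):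
the determinant of the `k × k` matrix whose `(i,j)` entry is `Δ^{i·m} u_{n+j}`.
By convention `H_k = 0` for `k < 0`, and `H_0 = 1` (empty determinant). -/
noncomputable def Hd (m : ℕ) (u : ℕ → ℝ) (k : ℤ) (n : ℕ) : ℝ :=
  if k < 0 then 0
  else Matrix.det (Matrix.of fun i j : Fin k.toNat => fd^[i.val * m] u (n + j.val))

open Matrix

namespace Fin

variable {r : ℕ}

lemma succ_castSucc_ne_last (j : Fin r) : j.castSucc.succ ≠ last (r + 1) := by
  rw [succ_castSucc]; exact castSucc_ne_last _

def interiorSumEndpointsEquiv (r : ℕ) : Fin r ⊕ Fin 2 ≃ Fin (r + 2) :=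
  finSumFinEquiv.trans (cycleRange (last r).castSucc)

@[simp] lemma interiorSumEndpointsEquiv_inl (i : Fin r) :
    interiorSumEndpointsEquiv r (.inl i) = i.castSucc.succ := by
  have : castAdd 2 i < (last r).castSucc := lt_def.2 (by simp)
  ext; simp [interiorSumEndpointsEquiv, coe_cycleRange_of_lt this]

@[simp] lemma interiorSumEndpointsEquiv_inr_zero : interiorSumEndpointsEquiv r (.inr 0) = 0 :=
  cycleRange_of_eq (Fin.ext (by simp))

@[simp] lemma interiorSumEndpointsEquiv_inr_one :
    interiorSumEndpointsEquiv r (.inr 1) = last (r + 1) :=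
  cycleRange_of_gt (lt_def.2 (by simp))

end Fin

namespace Matrix

variable {R : Type*} [CommRing R] {ι : Type*} {N : ℕ}

def fwdDiffCols (M : Matrix ι (Fin (N + 1)) R) : Matrix ι (Fin (N + 1)) R :=
  of fun i => Fin.snoc (fun j : Fin N => M i j.succ - M i j.castSucc) (M i (Fin.last N))

@[simp] lemma fwdDiffCols_apply_castSucc (M : Matrix ι (Fin (N + 1)) R) (i : ι) (j : Fin N) :
    fwdDiffCols M i j.castSucc = M i j.succ - M i j.castSucc := by
  simp [fwdDiffCols]

@[simp] lemma fwdDiffCols_apply_last (M : Matrix ι (Fin (N + 1)) R) (i : ι) :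
    fwdDiffCols M i (Fin.last N) = M i (Fin.last N) := by
  simp [fwdDiffCols]

lemma fwdDiffCols_eq_mul (M : Matrix ι (Fin (N + 1)) R) :
    fwdDiffCols M = M * fwdDiffCols (1 : Matrix (Fin (N + 1)) (Fin (N + 1)) R) := by
  ext i j
  induction j using Fin.lastCases <;> simp [mul_apply, one_apply, mul_sub]

lemma det_fwdDiffCols_one :
    (fwdDiffCols (1 : Matrix (Fin (N + 1)) (Fin (N + 1)) R)).det = (-1) ^ N := by
  rw [det_of_isLowerTriangular]
  · simp [Fin.prod_univ_castSucc, Fin.castSucc_lt_succ.ne]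
  · intro i j hij
    rw [OrderDual.toDual_lt_toDual] at hij
    induction j using Fin.lastCases with
    | last => simp [hij.ne]
    | cast j => simp [hij.ne, (hij.trans Fin.castSucc_lt_succ).ne]

lemma det_fwdDiffCols (M : Matrix (Fin (N + 1)) (Fin (N + 1)) R) :
    (fwdDiffCols M).det = (-1) ^ N * M.det := by
  rw [fwdDiffCols_eq_mul, det_mul, det_fwdDiffCols_one, mul_comm]

lemma fwdDiffCols_submatrix_succ {l : Type*} (M : Matrix ι (Fin (N + 2)) R) (f : l → ι) :
    (fwdDiffCols M).submatrix f Fin.succ = fwdDiffCols (M.submatrix f Fin.succ) := by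
  ext i j
  induction j using Fin.lastCases <;>
    simp only [submatrix_apply, Fin.succ_last, Fin.succ_castSucc, fwdDiffCols_apply_castSucc,
      fwdDiffCols_apply_last]

section DesnanotJacobi

variable {r : ℕ}

lemma det_eq_det_interior_mul_of_endpoint_rows (M : Matrix (Fin (r + 2)) (Fin (r + 2)) R)
    (h0 : ∀ j : Fin r, M 0 j.castSucc.succ = 0)
    (hl : ∀ j : Fin r, M (Fin.last _) j.castSucc.succ = 0) :
    M.det = (M.submatrix (Fin.succ ∘ Fin.castSucc) (Fin.succ ∘ Fin.castSucc)).det *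
      (M 0 0 * M (Fin.last _) (Fin.last _) - M 0 (Fin.last _) * M (Fin.last _) 0) := by
  set e := Fin.interiorSumEndpointsEquiv r
  have hlower : (M.submatrix e e).toBlocks₂₁ = 0 := by
    ext b j; fin_cases b <;> simp [e, toBlocks₂₁, h0, hl]
  rw [← det_submatrix_equiv_self e, ← fromBlocks_toBlocks (M.submatrix e e), hlower,
    det_fromBlocks_zero₂₁, det_fin_two]
  simp only [e, toBlocks₁₁, toBlocks₂₂, submatrix_apply, of_apply,
    Fin.interiorSumEndpointsEquiv_inl, Fin.interiorSumEndpointsEquiv_inr_zero,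
    Fin.interiorSumEndpointsEquiv_inr_one]
  rfl

theorem desnanot_jacobi_of_det_ne_zero [IsDomain R] (M : Matrix (Fin (r + 2)) (Fin (r + 2)) R)
    (hM : M.det ≠ 0) :
    M.det * (M.submatrix (Fin.succ ∘ Fin.castSucc) (Fin.succ ∘ Fin.castSucc)).det =
      (M.submatrix Fin.succ Fin.succ).det * (M.submatrix Fin.castSucc Fin.castSucc).det -
        (M.submatrix Fin.castSucc Fin.succ).det * (M.submatrix Fin.succ Fin.castSucc).det := by
  have hl0 : Fin.last (r + 1) ≠ 0 := Fin.last_pos.ne'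
  -- `P * M` keeps the interior rows of `M` and has `det M` times unit vectors as end rows.
  set P := (updateRow (1 : Matrix (Fin (r + 2)) (Fin (r + 2)) R) 0 (adjugate M 0)).updateRow
    (Fin.last _) (adjugate M (Fin.last _))
  have hP : P.det = adjugate M 0 0 * adjugate M (Fin.last _) (Fin.last _) -
      adjugate M (Fin.last _) 0 * adjugate M 0 (Fin.last _) := by
    rw [← det_transpose, det_eq_det_interior_mul_of_endpoint_rows]
    · have : Pᵀ.submatrix (Fin.succ ∘ Fin.castSucc) (Fin.succ ∘ Fin.castSucc) = 1 := by
        ext i j; simp [P, updateRow_apply, one_apply, eq_comm, (Fin.succ_castSucc_ne_last _).symm]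
      simp [this, P]
    all_goals intro j; simp [P, updateRow_apply]
  have hrow : ∀ i, adjugate M i ᵥ* M = Pi.single i M.det := by
    intro i
    rw [← mul_apply_eq_vecMul, adjugate_mul]
    ext; simp [Pi.single_apply, one_apply, eq_comm]
  have hPM : (P * M).det =
      (M.submatrix (Fin.succ ∘ Fin.castSucc) (Fin.succ ∘ Fin.castSucc)).det * (M.det * M.det) := by
    rw [det_eq_det_interior_mul_of_endpoint_rows]
    · have : ((P * M).submatrix (Fin.succ ∘ Fin.castSucc) (Fin.succ ∘ Fin.castSucc)) =
          M.submatrix (Fin.succ ∘ Fin.castSucc) (Fin.succ ∘ Fin.castSucc) := by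
        ext i j; simp [P, updateRow_mul, updateRow_apply]
      rw [this]
      simp [P, updateRow_mul, hl0, hrow, updateRow_apply]
    all_goals intro j; simp [P, updateRow_mul, hrow, updateRow_apply]
  have hPdet : P.det =
      M.det * (M.submatrix (Fin.succ ∘ Fin.castSucc) (Fin.succ ∘ Fin.castSucc)).det :=
    mul_right_cancel₀ hM (by rw [← det_mul, hPM]; ring)
  rw [← hPdet, hP]
  simp only [adjugate_fin_succ_eq_det_submatrix, Fin.succAbove_zero, Fin.succAbove_last,
    Fin.val_zero, Fin.val_last]
  ring_nf
  simp [pow_mul']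

theorem desnanot_jacobi (M : Matrix (Fin (r + 2)) (Fin (r + 2)) R) :
    M.det * (M.submatrix (Fin.succ ∘ Fin.castSucc) (Fin.succ ∘ Fin.castSucc)).det =
      (M.submatrix Fin.succ Fin.succ).det * (M.submatrix Fin.castSucc Fin.castSucc).det -
        (M.submatrix Fin.castSucc Fin.succ).det * (M.submatrix Fin.succ Fin.castSucc).det := by
  set f := MvPolynomial.aeval (R := ℤ) fun p : Fin (r + 2) × Fin (r + 2) => M p.1 p.2
  have hM : (mvPolynomialX _ _ ℤ).map f = M := mvPolynomialX_mapMatrix_aeval ℤ M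
  have generic := desnanot_jacobi_of_det_ne_zero _ (det_mvPolynomialX_ne_zero (Fin (r + 2)) ℤ)
  simpa only [map_mul, map_sub, AlgHom.map_det, AlgHom.mapMatrix_apply, ← submatrix_map, hM] using
    congrArg f generic

end DesnanotJacobi

end Matrix

lemma fd_apply (u : ℕ → ℝ) (n : ℕ) : fd u n = u (n + 1) - u n := rfl

def hankelMatrix (m : ℕ) (u : ℕ → ℝ) (k n : ℕ) : Matrix (Fin k) (Fin k) ℝ :=
  Matrix.of fun i j => fd^[i * m] u (n + j)

lemma Hd_natCast (m : ℕ) (u : ℕ → ℝ) (k n : ℕ) : Hd m u k n = (hankelMatrix m u k n).det := by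
  simp [Hd, hankelMatrix]

section Hankel

variable (m : ℕ) (u : ℕ → ℝ) (N n : ℕ)

lemma hankelMatrix_submatrix_castSucc_succ :
    (hankelMatrix m u (N + 1) n).submatrix Fin.castSucc Fin.succ = hankelMatrix m u N (n + 1) := by
  ext i j
  simp [hankelMatrix, add_assoc, add_comm 1]

lemma hankelMatrix_submatrix_succ_succ :
    (hankelMatrix m u (N + 1) n).submatrix Fin.succ Fin.succ =
      hankelMatrix m (fd^[m] u) N (n + 1) := by
  ext i j
  simp [hankelMatrix, add_one_mul, Function.iterate_add_apply, add_assoc, add_comm 1]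

lemma fwdDiffCols_hankelMatrix_submatrix_castSucc_castSucc :
    (fwdDiffCols (hankelMatrix m u (N + 1) n)).submatrix Fin.castSucc Fin.castSucc =
      hankelMatrix m (fd u) N n := by
  ext i j
  simp [hankelMatrix, ← Function.iterate_succ_apply, Function.iterate_succ_apply', fd_apply,
    add_assoc]

lemma fwdDiffCols_hankelMatrix_submatrix_succ_castSucc :
    (fwdDiffCols (hankelMatrix m u (N + 1) n)).submatrix Fin.succ Fin.castSucc =
      hankelMatrix m (fd^[m + 1] u) N n := by
  ext i j
  simp [hankelMatrix, add_one_mul, Function.iterate_add_apply, ← Function.iterate_succ_apply,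
    Function.iterate_succ_apply', fd_apply, add_assoc]

lemma fwdDiffCols_hankelMatrix_submatrix_interior :
    (fwdDiffCols (hankelMatrix m u (N + 2) n)).submatrix (Fin.succ ∘ Fin.castSucc)
        (Fin.succ ∘ Fin.castSucc) = hankelMatrix m (fd^[m + 1] u) N (n + 1) := by
  rw [← submatrix_submatrix, fwdDiffCols_submatrix_succ, hankelMatrix_submatrix_succ_succ,
    fwdDiffCols_hankelMatrix_submatrix_castSucc_castSucc, ← Function.iterate_succ_apply' fd m u]

theorem hankelMatrix_det_identity (r : ℕ) :
    (hankelMatrix m (fd u) (r + 1) n).det * (hankelMatrix m (fd^[m] u) (r + 1) (n + 1)).det =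
      (hankelMatrix m (fd^[m + 1] u) (r + 1) n).det * (hankelMatrix m u (r + 1) (n + 1)).det -
        (hankelMatrix m u (r + 2) n).det * (hankelMatrix m (fd^[m + 1] u) r (n + 1)).det := by
  have h := desnanot_jacobi (fwdDiffCols (hankelMatrix m u (r + 2) n))
  rw [fwdDiffCols_submatrix_succ, fwdDiffCols_submatrix_succ, hankelMatrix_submatrix_succ_succ,
    hankelMatrix_submatrix_castSucc_succ, fwdDiffCols_hankelMatrix_submatrix_castSucc_castSucc,
    fwdDiffCols_hankelMatrix_submatrix_succ_castSucc, fwdDiffCols_hankelMatrix_submatrix_interior,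
    det_fwdDiffCols, det_fwdDiffCols, det_fwdDiffCols, pow_succ] at h
  refine mul_left_cancel₀ (pow_ne_zero r (neg_ne_zero.2 one_ne_zero) : (-1 : ℝ) ^ r ≠ 0) ?_
  linear_combination -h

end Hankel

theorem stmt_4_general (m : ℕ) (S : ℕ → ℝ) (k n : ℕ) (hk : 1 ≤ k) :
    Hd m (fd^[1] S) (k : ℤ) n * Hd m (fd^[m] S) (k : ℤ) (n + 1) =
      Hd m (fd^[m + 1] S) (k : ℤ) n * Hd m S (k : ℤ) (n + 1) -
        Hd m S ((k : ℤ) + 1) n * Hd m (fd^[m + 1] S) ((k : ℤ) - 1) (n + 1) := by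
  obtain ⟨r, rfl⟩ : ∃ r, k = r + 1 := ⟨k - 1, by omega⟩
  rw [show ((r + 1 : ℕ) : ℤ) + 1 = ((r + 2 : ℕ) : ℤ) by push_cast; ring,
    show ((r + 1 : ℕ) : ℤ) - 1 = (r : ℤ) by push_cast; ring]
  simpa only [Hd_natCast, Function.iterate_one] using hankelMatrix_det_identity m S n r

/-- Lemma 3: for `k ≥ 1`, `n ≥ 0`: `H_k(ΔS_n) H_k(Δ^m S_{n+1})
= H_k(Δ^{m+1}S_n) H_k(S_{n+1}) − H_{k+1}(S_n) H_{k−1}(Δ^{m+1}S_{n+1})`. -/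
theorem stmt_4 (m : ℕ) (hm : 1 ≤ m) (S : ℕ → ℝ) (k n : ℕ) (hk : 1 ≤ k) :
    Hd m (fd^[1] S) (k : ℤ) n * Hd m (fd^[m] S) (k : ℤ) (n + 1) =
      Hd m (fd^[m + 1] S) (k : ℤ) n * Hd m S (k : ℤ) (n + 1) -
        Hd m S ((k : ℤ) + 1) n * Hd m (fd^[m + 1] S) ((k : ℤ) - 1) (n + 1) :=
  stmt_4_general m S k n hk
end

section
/- For every integer k ≥ 0 and every n ≥ 0: (i) F_{(m+1)k+1}^{(n)}·G_{(m+1)k+1}^{(n+1)} − F_{(m+1)k+1}^{(n+1)}·G_{(m+1)k+1}^{(n)} = −F_{(m+1)k+2}^{(n)}·F_{(m+1)k}^{(n+1)}; and (ii) for every i = 2, …, m+1, F_{(m+1)k+i}^{(n)}·G_{(m+1)k+i}^{(n+1)} − F_{(m+1)k+i}^{(n+1)}·G_{(m+1)k+i}^{(n)} = F_{(m+1)k+i+1}^{(n)}·F_{(m+1)k+i−1}^{(n+1)}. -/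
/-- Determinant `Φ_k(u_n)`: the `k × k` determinant whose first row is
`(n, n+1, …, n+k−1)` and whose `i`-th row (`1 ≤ i ≤ k−1`) is
`(Δ^{(i−1)m} u_n, …, Δ^{(i−1)m} u_{n+k−1})`. `Φ_0 = 1` (empty determinant). -/
noncomputable def Phi (m : ℕ) (u : ℕ → ℝ) (k : ℕ) (n : ℕ) : ℝ :=
  Matrix.det (Matrix.of fun i j : Fin k =>
    if i.val = 0 then ((n + j.val : ℕ) : ℝ) else fd^[(i.val - 1) * m] u (n + j.val))

/-- `F_j^{(n)}` for `j ≥ −m`: writing `j = (m+1)(k−1) + i` with `k ≥ 0` and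
`i ∈ {1, …, m+1}` (equivalently `j + m = (m+1)k + (i−1)`), set
`F_j^{(n)} = H_k(Δ^i S_n)`. -/
noncomputable def Fb (m : ℕ) (S : ℕ → ℝ) (j : ℤ) (n : ℕ) : ℝ :=
  Hd m (fd^[(j + m).toNat % (m + 1) + 1] S) (((j + m).toNat / (m + 1) : ℕ)) n

/-- `G_j^{(n)}` for `j ≥ −m`: writing `j = (m+1)(k−1) + i` with `k ≥ 0` and
`i ∈ {1, …, m+1}`, set `G_j^{(n)} = H_{k−1}(Δ^{m+2} S_n)` if `i = 1`,
`G_j^{(n)} = H_{k+1}(S_n)` if `i = m+1` (i.e. `j = (m+1)k`), and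
`G_j^{(n)} = Φ_{k+1}(Δ^{i−1} S_n)` for `i = 2, …, m`. -/
noncomputable def Gb (m : ℕ) (S : ℕ → ℝ) (j : ℤ) (n : ℕ) : ℝ :=
  let t := (j + m).toNat
  let k := t / (m + 1)
  let i := t % (m + 1) + 1
  if i = 1 then Hd m (fd^[m + 2] S) ((k : ℤ) - 1) n
  else if i = m + 1 then Hd m S ((k : ℤ) + 1) n
  else Phi m (fd^[i - 1] S) (k + 1) n

open Polynomial

namespace Matrix

theorem updateCol_zero_submatrix_succAbove_one_castSucc {α : Type*} {K : ℕ}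
    (A : Matrix (Fin (K + 2)) (Fin (K + 2)) α) (v : Fin (K + 2) → α) :
    (A.updateCol 0 v).submatrix (Fin.succAbove 1) Fin.castSucc =
      (A.submatrix (Fin.succAbove 1) Fin.castSucc).updateCol 0 (v ∘ Fin.succAbove 1) := by
  ext a b
  simp [updateCol_apply, Fin.castSucc_eq_zero_iff]

variable {R : Type*} [CommRing R]

theorem det_one_updateCol_updateCol {n : Type*} [Fintype n] [DecidableEq n] {i j : n}
    (hij : i ≠ j) (u v : n → R) :
    (((1 : Matrix n n R).updateCol i u).updateCol j v).det = u i * v j - u j * v i := by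
  let U : Matrix n (Fin 2) R :=
    of fun a b => ![u a - (1 : Matrix n n R) a i, v a - (1 : Matrix n n R) a j] b
  let V : Matrix (Fin 2) n R := of fun b c => ![(1 : Matrix n n R) i c, (1 : Matrix n n R) j c] b
  have hUV : ((1 : Matrix n n R).updateCol i u).updateCol j v = 1 + U * V := by
    ext a c
    have hji := hij.symm
    by_cases hc : c = j <;> by_cases hc' : c = i <;>
      simp_all [mul_apply, Fin.sum_univ_two, U, V, one_apply, eq_comm (b := c)]
  rw [hUV, det_one_add_mul_comm, det_fin_two]
  simp [U, V, mul_apply, one_apply, hij, hij.symm]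
  ring

theorem det_updateCol_single_one {K : ℕ} (A : Matrix (Fin (K + 1)) (Fin (K + 1)) R)
    (i j : Fin (K + 1)) :
    (A.updateCol j (Pi.single i 1)).det =
      (-1) ^ (i + j : ℕ) * (A.submatrix i.succAbove j.succAbove).det := by
  rw [← det_transpose, ← updateRow_transpose, ← adjugate_apply,
    adjugate_fin_succ_eq_det_submatrix, ← transpose_submatrix, det_transpose, add_comm]

theorem desnanot_jacobi_of_isLeftRegular {K : ℕ} (A : Matrix (Fin (K + 2)) (Fin (K + 2)) R)
    (hA : IsLeftRegular A.det) :
    A.det * (A.submatrix (fun i : Fin K => i.succ.succ) (fun j => j.succ.castSucc)).det =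
      (A.submatrix Fin.succ Fin.succ).det * (A.submatrix (Fin.succAbove 1) Fin.castSucc).det -
        (A.submatrix Fin.succ Fin.castSucc).det * (A.submatrix (Fin.succAbove 1) Fin.succ).det := by
  set I := (A.submatrix (fun i : Fin K => i.succ.succ) (fun j => j.succ.castSucc)).det with hI
  set X := (A.submatrix Fin.succ Fin.succ).det * (A.submatrix (Fin.succAbove 1) Fin.castSucc).det -
    (A.submatrix Fin.succ Fin.castSucc).det * (A.submatrix (Fin.succAbove 1) Fin.succ).det with hX
  set L := Fin.last (K + 1)
  have h0L : (0 : Fin (K + 2)) ≠ L := Fin.last_pos.ne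
  -- Jacobi: `A * C` has columns `det A • e₀`, `det A • e₁` in place of the first and last columns
  -- of `A`, while `det C` is a `2 × 2` minor of the adjugate.
  let C := ((1 : Matrix _ _ R).updateCol 0 fun i => adjugate A i 0).updateCol L
    fun i => adjugate A i 1
  have hAC : A * C =
      (A.updateCol 0 (A.det • Pi.single 0 1)).updateCol L (A.det • Pi.single 1 1) := by
    have hcol : ∀ c, A *ᵥ (fun i => adjugate A i c) = A.det • Pi.single c 1 := by
      intro c
      ext i
      change (A * adjugate A) i c = _
      simp [mul_adjugate, Pi.single_apply, one_apply]
    rw [mul_updateCol, mul_updateCol, Matrix.mul_one, hcol, hcol]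
  have hC : C.det = (-1) ^ K * X := by
    rw [det_one_updateCol_updateCol h0L, hX]
    simp only [adjugate_fin_succ_eq_det_submatrix, Fin.succAbove_zero, L, Fin.val_last,
      Fin.succAbove_last, Fin.val_zero, Fin.val_one]
    ring
  have hAC' : (A * C).det = A.det * (A.det * ((-1) ^ K * I)) := by
    rw [hAC, det_updateCol_smul, updateCol_comm _ h0L, det_updateCol_smul,
      updateCol_comm _ h0L.symm, det_updateCol_single_one, Fin.succAbove_last,
      updateCol_zero_submatrix_succAbove_one_castSucc]
    have he : (Pi.single 0 1 : Fin (K + 2) → R) ∘ Fin.succAbove 1 = Pi.single 0 1 := by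
      ext b
      simp [Pi.single_apply, Fin.succAbove_eq_zero_iff]
    rw [he, det_updateCol_single_one, submatrix_submatrix, hI]
    simp only [L, Fin.val_last, Fin.val_zero, Fin.val_one, Fin.succAbove_zero, Function.comp_def,
      Fin.one_succAbove_succ, Fin.castSucc_succ]
    ring
  have key : (-1) ^ K * X = A.det * ((-1) ^ K * I) :=
    hA (by simp only; rw [← hC, ← det_mul, hAC'])
  have hsign : ((-1 : R) ^ K) ^ 2 = 1 := by rw [← pow_mul, pow_mul', neg_one_sq, one_pow]
  linear_combination (-(-1 : R) ^ K) * key + (X - A.det * I) * hsign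

theorem desnanot_jacobi_s10 {K : ℕ} (A : Matrix (Fin (K + 2)) (Fin (K + 2)) R) :
    A.det * (A.submatrix (fun i : Fin K => i.succ.succ) (fun j => j.succ.castSucc)).det =
      (A.submatrix Fin.succ Fin.succ).det * (A.submatrix (Fin.succAbove 1) Fin.castSucc).det -
        (A.submatrix Fin.succ Fin.castSucc).det * (A.submatrix (Fin.succAbove 1) Fin.succ).det := by
  -- `X • 1 + A` has monic determinant and specialises to `A` at `X = 0`
  let A' : Matrix (Fin (K + 2)) (Fin (K + 2)) R[X] := (X : R[X]) • 1 + A.map C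
  have hA' : A'.map (evalRingHom 0) = A := by
    ext i j
    by_cases hij : i = j <;> simp [A', hij]
  have h := congrArg (evalRingHom (0 : R)) (desnanot_jacobi_of_isLeftRegular A'
    (Monic.isRegular (leadingCoeff_det_X_one_add_C A)).left)
  simpa only [map_mul, map_sub, RingHom.map_det, RingHom.mapMatrix_apply, ← submatrix_map, hA']
    using h

theorem det_eq_det_fwdDiff_of_row_zero_eq_one {K : ℕ} (M : Matrix (Fin (K + 1)) (Fin (K + 1)) R)
    (h : ∀ j, M 0 j = 1) :
    M.det = (of fun i j : Fin K => M i.succ j.succ - M i.succ j.castSucc).det := by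
  have hcols : M.det = (of fun i j =>
      Fin.cases (M i 0) (fun j : Fin K => M i j.succ - M i j.castSucc) j).det :=
    det_eq_of_forall_col_eq_smul_add_pred (fun _ => 1) (fun _ => rfl) (fun i j => by simp)
  rw [hcols, det_succ_row_zero, Fin.sum_univ_succ]
  simp only [of_apply, h, Fin.cases_zero, Fin.cases_succ, sub_self, mul_zero, zero_mul,
    Finset.sum_const_zero, add_zero, Fin.val_zero, pow_zero, one_mul, Fin.succAbove_zero]
  rfl

end Matrix

open Matrix fwdDiff

section Casoratian

variable {R : Type*} [CommRing R]

def consRow (f : ℕ → R) (r : ℕ → ℕ → R) : ℕ → ℕ → R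
  | 0 => f
  | a + 1 => r a

def casoratian (r : ℕ → ℕ → R) (K x : ℕ) : R := (of fun a b : Fin K => r a (x + b)).det

theorem casoratian_consRow_one (r : ℕ → ℕ → R) (K x : ℕ) :
    casoratian (consRow 1 r) (K + 1) x = casoratian (fun a => Δ_[1] (r a)) K x := by
  rw [casoratian, det_eq_det_fwdDiff_of_row_zero_eq_one _ fun _ => rfl]
  simp [casoratian, consRow, fwdDiff, add_assoc]

theorem casoratian_desnanot_jacobi (r : ℕ → ℕ → R) (K x : ℕ) :
    casoratian (fun a => Δ_[1] (r a)) (K + 1) x * casoratian (fun a => r (a + 1)) K (x + 1) =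
      casoratian r (K + 1) (x + 1) * casoratian (fun a => Δ_[1] (r (a + 1))) K x -
        casoratian r (K + 1) x * casoratian (fun a => Δ_[1] (r (a + 1))) K (x + 1) := by
  let M : Matrix (Fin (K + 2)) (Fin (K + 2)) R := of fun a b => consRow 1 r a (x + b)
  have h := desnanot_jacobi_s10 M
  have hM : M.det = casoratian (fun a => Δ_[1] (r a)) (K + 1) x := casoratian_consRow_one r _ x
  have h11 : M.submatrix (fun i : Fin K => i.succ.succ) (fun j => j.succ.castSucc) =
      of fun a b : Fin K => r (a + 1) (x + 1 + b) := by
    ext a b; simp [M, consRow, add_assoc, add_comm 1]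
  have h00 : M.submatrix Fin.succ Fin.succ = of fun a b : Fin (K + 1) => r a (x + 1 + b) := by
    ext a b; simp [M, consRow, add_assoc, add_comm 1]
  have h0L : M.submatrix Fin.succ Fin.castSucc = of fun a b : Fin (K + 1) => r a (x + b) := by
    ext a b; simp [M, consRow]
  have h1L : M.submatrix (Fin.succAbove 1) Fin.castSucc =
      of fun a b : Fin (K + 1) => consRow 1 (fun a => r (a + 1)) a (x + b) := by
    ext a b; cases a using Fin.cases <;> simp [M, consRow]
  have h10 : M.submatrix (Fin.succAbove 1) Fin.succ =
      of fun a b : Fin (K + 1) => consRow 1 (fun a => r (a + 1)) a (x + 1 + b) := by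
    ext a b; cases a using Fin.cases <;> simp [M, consRow, add_assoc, add_comm 1]
  rw [hM, h11, h00, h0L, h1L, h10] at h
  rw [← casoratian_consRow_one _ K x, ← casoratian_consRow_one _ K (x + 1)]
  exact h

end Casoratian

theorem fd_eq_fwdDiff (u : ℕ → ℝ) : fd u = Δ_[1] u := rfl

theorem Hd_iterate (m s : ℕ) (S : ℕ → ℝ) (K x : ℕ) :
    Hd m (fd^[s] S) K x = casoratian (fun a => fd^[a * m + s] S) K x := by
  simp [Hd, casoratian, Function.iterate_add_apply]

theorem Phi_iterate (m s : ℕ) (S : ℕ → ℝ) (K x : ℕ) :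
    Phi m (fd^[s] S) K x =
      casoratian (consRow (fun y => (y : ℝ)) fun a => fd^[a * m + s] S) K x := by
  unfold Phi casoratian
  congr 1
  ext ⟨_ | a, ha⟩ b <;> simp [consRow, Function.iterate_add_apply]

theorem Hd_desnanot_jacobi (m s : ℕ) (S : ℕ → ℝ) (K x : ℕ) :
    Hd m (fd^[s + 1] S) ((K + 1 : ℕ) : ℤ) x * Hd m (fd^[s + m] S) K (x + 1) =
      Hd m (fd^[s] S) ((K + 1 : ℕ) : ℤ) (x + 1) * Hd m (fd^[s + m + 1] S) K x -
        Hd m (fd^[s] S) ((K + 1 : ℕ) : ℤ) x * Hd m (fd^[s + m + 1] S) K (x + 1) := by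
  have h := casoratian_desnanot_jacobi (fun a => fd^[a * m + s] S) K x
  simp only [← fd_eq_fwdDiff, ← Function.iterate_succ_apply' fd, Nat.succ_eq_add_one] at h
  have hshift : (fun a => fd^[a * m + (s + m)] S) = fun a => fd^[(a + 1) * m + s] S := by
    funext a; ring_nf
  have hshift' : (fun a => fd^[a * m + (s + m + 1)] S) = fun a => fd^[(a + 1) * m + s + 1] S := by
    funext a; ring_nf
  simp only [Hd_iterate, hshift, hshift']
  exact h

theorem Phi_desnanot_jacobi (m s : ℕ) (S : ℕ → ℝ) (K x : ℕ) :
    Hd m (fd^[s + 2] S) ((K + 1 : ℕ) : ℤ) x * Hd m (fd^[s] S) ((K + 1 : ℕ) : ℤ) (x + 1) =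
      Phi m (fd^[s] S) (K + 2) (x + 1) * Hd m (fd^[s + 1] S) ((K + 1 : ℕ) : ℤ) x -
        Phi m (fd^[s] S) (K + 2) x * Hd m (fd^[s + 1] S) ((K + 1 : ℕ) : ℤ) (x + 1) := by
  set r := consRow (fun y => (y : ℝ)) fun a => fd^[a * m + s] S
  have hr : (fun a => Δ_[1] (r a)) = consRow 1 fun a => fd^[a * m + s + 1] S := by
    funext a y
    cases a with
    | zero => simp [r, consRow, fwdDiff]
    | succ a => simp [r, consRow, ← fd_eq_fwdDiff, Function.iterate_succ_apply']
  have h := casoratian_desnanot_jacobi r (K + 1) x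
  rw [hr, casoratian_consRow_one] at h
  simp only [r, consRow, ← fd_eq_fwdDiff, ← Function.iterate_succ_apply' fd] at h
  simp only [Hd_iterate, Phi_iterate]
  exact h

theorem toNat_add_mod_div {j : ℤ} {m kk r : ℕ} (hr : r ≤ m) (hj : j + m = (m + 1) * kk + r) :
    (j + m).toNat % (m + 1) = r ∧ (j + m).toNat / (m + 1) = kk := by
  have hz : (((r + (m + 1) * kk : ℕ)) : ℤ) = j + m := by push_cast; linarith
  have ht : (j + m).toNat = r + (m + 1) * kk := by rw [← hz, Int.toNat_natCast]
  rw [ht, Nat.add_mul_mod_self_left, Nat.add_mul_div_left _ _ (Nat.succ_pos m),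
    Nat.mod_eq_of_lt (Nat.lt_succ_of_le hr), Nat.div_eq_of_lt (Nat.lt_succ_of_le hr), zero_add]
  exact ⟨rfl, rfl⟩

theorem Fb_eq_Hd {m : ℕ} (S : ℕ → ℝ) {j : ℤ} {kk r : ℕ} (hr : r ≤ m)
    (hj : j + m = (m + 1) * kk + r) (n : ℕ) : Fb m S j n = Hd m (fd^[r + 1] S) kk n := by
  obtain ⟨hmod, hdiv⟩ := toNat_add_mod_div hr hj
  rw [Fb, hmod, hdiv]

theorem Gb_eq_Hd_of_mod_eq_zero {m : ℕ} (S : ℕ → ℝ) {j : ℤ} {kk : ℕ}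
    (hj : j + m = (m + 1) * (kk + 1)) (n : ℕ) : Gb m S j n = Hd m (fd^[m + 2] S) kk n := by
  obtain ⟨hmod, hdiv⟩ :=
    toNat_add_mod_div (kk := kk + 1) (r := 0) (Nat.zero_le m) (by push_cast; linarith)
  simp [Gb, hmod, hdiv]

theorem Gb_eq_Phi {m : ℕ} (S : ℕ → ℝ) {j : ℤ} {kk r : ℕ} (hr₀ : 1 ≤ r) (hr : r < m)
    (hj : j + m = (m + 1) * kk + r) (n : ℕ) : Gb m S j n = Phi m (fd^[r] S) (kk + 1) n := by
  obtain ⟨hmod, hdiv⟩ := toNat_add_mod_div hr.le hj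
  simp [Gb, hmod, hdiv, hr.ne, Nat.one_le_iff_ne_zero.mp hr₀]

theorem Gb_eq_Hd_of_mod_eq_last {m : ℕ} (S : ℕ → ℝ) {j : ℤ} {kk : ℕ} (hm : 1 ≤ m)
    (hj : j + m = (m + 1) * kk + m) (n : ℕ) : Gb m S j n = Hd m S (kk + 1 : ℕ) n := by
  obtain ⟨hmod, hdiv⟩ := toNat_add_mod_div le_rfl hj
  simp [Gb, hmod, hdiv, Nat.one_le_iff_ne_zero.mp hm]

theorem Fb_mul_Gb_sub_add_one {m : ℕ} (hm : 1 ≤ m) (S : ℕ → ℝ) (k n : ℕ) :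
    Fb m S (((m : ℤ) + 1) * k + 1) n * Gb m S (((m : ℤ) + 1) * k + 1) (n + 1) -
        Fb m S (((m : ℤ) + 1) * k + 1) (n + 1) * Gb m S (((m : ℤ) + 1) * k + 1) n =
      -(Fb m S (((m : ℤ) + 1) * k + 2) n * Fb m S (((m : ℤ) + 1) * k) (n + 1)) := by
  set N : ℤ := (m + 1) * k with hN
  simp only [Fb_eq_Hd S (j := N + 1) (kk := k + 1) (r := 0) m.zero_le (by rw [hN]; push_cast; ring),
    Fb_eq_Hd S (j := N + 2) (kk := k + 1) (r := 1) hm (by rw [hN]; push_cast; ring),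
    Fb_eq_Hd S (j := N) (kk := k) (r := m) le_rfl (by rw [hN]),
    Gb_eq_Hd_of_mod_eq_zero S (j := N + 1) (kk := k) (by rw [hN]; ring)]
  linear_combination (norm := ring_nf) Hd_desnanot_jacobi m 1 S k n

theorem Fb_mul_Gb_sub_add_of_lt {m : ℕ} (S : ℕ → ℝ) (k n q : ℕ) (hq : q + 2 ≤ m) :
    Fb m S (((m : ℤ) + 1) * k + (q + 2 : ℕ)) n *
          Gb m S (((m : ℤ) + 1) * k + (q + 2 : ℕ)) (n + 1) -
        Fb m S (((m : ℤ) + 1) * k + (q + 2 : ℕ)) (n + 1) *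
          Gb m S (((m : ℤ) + 1) * k + (q + 2 : ℕ)) n =
      Fb m S (((m : ℤ) + 1) * k + (q + 2 : ℕ) + 1) n *
        Fb m S (((m : ℤ) + 1) * k + (q + 2 : ℕ) - 1) (n + 1) := by
  set N : ℤ := (m + 1) * k with hN
  simp only [Fb_eq_Hd S (m := m) (j := N + (q + 2 : ℕ)) (kk := k + 1) (r := q + 1) (by omega)
      (by rw [hN]; push_cast; ring),
    Fb_eq_Hd S (m := m) (j := N + (q + 2 : ℕ) + 1) (kk := k + 1) (r := q + 2) hq
      (by rw [hN]; push_cast; ring),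
    Fb_eq_Hd S (m := m) (j := N + (q + 2 : ℕ) - 1) (kk := k + 1) (r := q) (by omega)
      (by rw [hN]; push_cast; ring),
    Gb_eq_Phi S (m := m) (j := N + (q + 2 : ℕ)) (kk := k + 1) (r := q + 1) (by omega) (by omega)
      (by rw [hN]; push_cast; ring)]
  linear_combination (norm := ring_nf) -Phi_desnanot_jacobi m (q + 1) S k n

theorem Fb_mul_Gb_sub_add_succ {m : ℕ} (hm : 1 ≤ m) (S : ℕ → ℝ) (k n : ℕ) :
    Fb m S (((m : ℤ) + 1) * k + (m + 1 : ℕ)) n *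
          Gb m S (((m : ℤ) + 1) * k + (m + 1 : ℕ)) (n + 1) -
        Fb m S (((m : ℤ) + 1) * k + (m + 1 : ℕ)) (n + 1) *
          Gb m S (((m : ℤ) + 1) * k + (m + 1 : ℕ)) n =
      Fb m S (((m : ℤ) + 1) * k + (m + 1 : ℕ) + 1) n *
        Fb m S (((m : ℤ) + 1) * k + (m + 1 : ℕ) - 1) (n + 1) := by
  obtain ⟨q, rfl⟩ : ∃ q, m = q + 1 := ⟨m - 1, by omega⟩
  set N : ℤ := (↑(q + 1) + 1) * k with hN
  simp only [Fb_eq_Hd S (j := N + (q + 1 + 1 : ℕ)) (kk := k + 1) (r := q + 1) le_rfl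
      (by rw [hN]; push_cast; ring),
    Fb_eq_Hd S (m := q + 1) (j := N + (q + 1 + 1 : ℕ) + 1) (kk := k + 2) (r := 0) (by omega)
      (by rw [hN]; push_cast; ring),
    Fb_eq_Hd S (m := q + 1) (j := N + (q + 1 + 1 : ℕ) - 1) (kk := k + 1) (r := q) (by omega)
      (by rw [hN]; push_cast; ring),
    Gb_eq_Hd_of_mod_eq_last S (j := N + (q + 1 + 1 : ℕ)) (kk := k + 1) hm
      (by rw [hN]; push_cast; ring)]
  have h := Hd_desnanot_jacobi (q + 1) 0 S (k + 1) n
  rw [Function.iterate_zero_apply] at h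
  linear_combination (norm := ring_nf) -h

/-- Relations (21) and (23): for every `k, n ≥ 0`,
(i) `F_{(m+1)k+1}^{(n)} G_{(m+1)k+1}^{(n+1)} − F_{(m+1)k+1}^{(n+1)} G_{(m+1)k+1}^{(n)}
= −F_{(m+1)k+2}^{(n)} F_{(m+1)k}^{(n+1)}`, and
(ii) for `i = 2, …, m+1`,
`F_{(m+1)k+i}^{(n)} G_{(m+1)k+i}^{(n+1)} − F_{(m+1)k+i}^{(n+1)} G_{(m+1)k+i}^{(n)}
= F_{(m+1)k+i+1}^{(n)} F_{(m+1)k+i−1}^{(n+1)}`. -/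
theorem stmt_10 (m : ℕ) (hm : 1 ≤ m) (S : ℕ → ℝ) (k n : ℕ) :
    (Fb m S (((m : ℤ) + 1) * k + 1) n * Gb m S (((m : ℤ) + 1) * k + 1) (n + 1) -
        Fb m S (((m : ℤ) + 1) * k + 1) (n + 1) * Gb m S (((m : ℤ) + 1) * k + 1) n =
      -(Fb m S (((m : ℤ) + 1) * k + 2) n * Fb m S (((m : ℤ) + 1) * k) (n + 1))) ∧
    (∀ i : ℕ, 2 ≤ i → i ≤ m + 1 →
      Fb m S (((m : ℤ) + 1) * k + i) n * Gb m S (((m : ℤ) + 1) * k + i) (n + 1) -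
          Fb m S (((m : ℤ) + 1) * k + i) (n + 1) * Gb m S (((m : ℤ) + 1) * k + i) n =
        Fb m S (((m : ℤ) + 1) * k + i + 1) n * Fb m S (((m : ℤ) + 1) * k + i - 1) (n + 1)) := by
  refine ⟨Fb_mul_Gb_sub_add_one hm S k n, fun i hi₂ hi => ?_⟩
  rcases hi.lt_or_eq with hi | rfl
  · obtain ⟨q, rfl⟩ : ∃ q, i = q + 2 := ⟨i - 2, by omega⟩
    exact Fb_mul_Gb_sub_add_of_lt S k n q (by omega)
  · exact Fb_mul_Gb_sub_add_succ hm S k n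
end
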